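/- arXiv:0804.1059 — 3 statements merged into one kernel-verified Lean document; each statement's English description precedes it below -/
import Mathlib

section
/- Let 𝒳 be a finite type, d ≥ 1, let P and Q be probability mass functions on 𝒳, and let (ρ^x)_{x∈𝒳} and (σ^x)_{x∈𝒳} be families of d×d density matrices. Then the trace distance between the two cq-states decomposes blockwise: δ(Σ_x P(x)·(E_{x,x}⊗ρ^x), Σ_x Q(x)·(E_{x,x}⊗σ^x)) = Σ_x δ(P(x)·ρ^x, Q(x)·σ^x). -/
open Matrix Kronecker
open scoped ComplexOrder

/-- Trace distance of two (Hermitian) matrices: half the sum of the absolute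
values of the eigenvalues of their difference. -/
noncomputable def traceDist {n : Type*} [Fintype n] [DecidableEq n]
    (A B : Matrix n n ℂ) : ℝ :=
  if h : (A - B).IsHermitian then (1 / 2) * ∑ i, |h.eigenvalues i| else 0

/-- A probability mass function on a finite type. -/
def IsPMF {𝒯 : Type*} [Fintype 𝒯] (P : 𝒯 → ℝ) : Prop :=
  (∀ t, 0 ≤ P t) ∧ ∑ t, P t = 1

/-- A density matrix: positive semidefinite (hence Hermitian) with trace 1. -/
def IsDensity {d : ℕ} (ρ : Matrix (Fin d) (Fin d) ℂ) : Prop :=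
  ρ.PosSemidef ∧ ρ.trace = 1

/-- The block-diagonal density matrix of a cq-state:  ρ = Σ_t P(t)·(E_{t,t} ⊗ ρ^t). -/
noncomputable def cqState {𝒯 : Type*} [Fintype 𝒯] [DecidableEq 𝒯] {d : ℕ}
    (P : 𝒯 → ℝ) (ρ : 𝒯 → Matrix (Fin d) (Fin d) ℂ) :
    Matrix (𝒯 × Fin d) (𝒯 × Fin d) ℂ :=
  ∑ t, (P t : ℂ) • (Matrix.single t t 1 ⊗ₖ ρ t)

/-! The difference of two cq-states is, after swapping the two index factors, the block-diagonal
matrix with blocks `P x • ρ x - Q x • σ x`. Its characteristic polynomial is the product of those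
of the blocks, so its eigenvalues are, with multiplicity, those of the blocks together, and half the
sum of their absolute values splits over the blocks. -/

theorem Matrix.charpoly_blockDiagonal {n o R : Type*} [Fintype n] [DecidableEq n] [Fintype o]
    [DecidableEq o] [CommRing R] (M : o → Matrix n n R) :
    (blockDiagonal M).charpoly = ∏ k, (M k).charpoly := by
  have : charmatrix (blockDiagonal M) = blockDiagonal fun k => charmatrix (M k) := by
    ext ⟨i, k⟩ ⟨j, l⟩
    rcases eq_or_ne k l with rfl | hkl
    · simp [charmatrix_apply, diagonal_apply, Prod.ext_iff]
    · simp [blockDiagonal_apply_ne _ _ _ hkl, Prod.ext_iff, hkl]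
  rw [charpoly, this, det_blockDiagonal]
  rfl

section traceDist

variable {m n o : Type*} [Fintype m] [DecidableEq m] [Fintype n] [DecidableEq n]
  [Fintype o] [DecidableEq o]

theorem traceDist_eq_sum_roots_charpoly {A B : Matrix n n ℂ} (h : (A - B).IsHermitian) :
    traceDist A B = 1 / 2 * ((A - B).charpoly.roots.map fun z => |z.re|).sum := by
  simp [traceDist, h, h.roots_charpoly_eq_eigenvalues, Multiset.map_map]

theorem traceDist_reindex (e : m ≃ n) (A B : Matrix m m ℂ) :
    traceDist (reindex e e A) (reindex e e B) = traceDist A B := by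
  have hsub : reindex e e A - reindex e e B = (A - B).submatrix e.symm e.symm := rfl
  by_cases h : (A - B).IsHermitian
  · have h' : (reindex e e A - reindex e e B).IsHermitian := hsub ▸ h.submatrix _
    rw [traceDist_eq_sum_roots_charpoly h, traceDist_eq_sum_roots_charpoly h', hsub,
      ← reindex_apply, charpoly_reindex]
  · have h' : ¬(reindex e e A - reindex e e B).IsHermitian := by
      rwa [hsub, isHermitian_submatrix_equiv]
    rw [traceDist, traceDist, dif_neg h, dif_neg h']

theorem traceDist_blockDiagonal (A B : o → Matrix n n ℂ) (h : ∀ k, (A k - B k).IsHermitian) :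
    traceDist (blockDiagonal A) (blockDiagonal B) = ∑ k, traceDist (A k) (B k) := by
  have hAB : (blockDiagonal A - blockDiagonal B).IsHermitian := by
    rw [← blockDiagonal_sub, isHermitian_blockDiagonal_iff]
    exact h
  have hprod : ∏ k, (A k - B k).charpoly ≠ 0 :=
    Finset.prod_ne_zero_iff.mpr fun k _ => (charpoly_monic _).ne_zero
  rw [traceDist_eq_sum_roots_charpoly hAB, ← blockDiagonal_sub, charpoly_blockDiagonal]
  simp only [Pi.sub_apply]
  rw [Polynomial.roots_prod _ _ hprod, Multiset.map_bind, Multiset.sum_bind,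
    ← Finset.sum_eq_multiset_sum, Finset.mul_sum]
  exact Finset.sum_congr rfl fun k _ => (traceDist_eq_sum_roots_charpoly (h k)).symm

end traceDist

theorem cqState_eq_reindex_blockDiagonal {𝒯 : Type*} [Fintype 𝒯] [DecidableEq 𝒯] {d : ℕ}
    (P : 𝒯 → ℝ) (ρ : 𝒯 → Matrix (Fin d) (Fin d) ℂ) :
    cqState P ρ = reindex (Equiv.prodComm _ _) (Equiv.prodComm _ _)
      (blockDiagonal fun t => (P t : ℂ) • ρ t) := by
  ext ⟨x, i⟩ ⟨y, j⟩
  rcases eq_or_ne x y with rfl | hxy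
  · simp [cqState, Matrix.sum_apply, single_apply]
  · simp [cqState, Matrix.sum_apply, single_apply, ite_and, blockDiagonal_apply_ne _ _ _ hxy, hxy]

theorem stmt0_general {𝒳 : Type*} [Fintype 𝒳] [DecidableEq 𝒳] {d : ℕ}
    (P Q : 𝒳 → ℝ)
    (ρ σ : 𝒳 → Matrix (Fin d) (Fin d) ℂ)
    (hρ : ∀ x, IsDensity (ρ x)) (hσ : ∀ x, IsDensity (σ x)) :
    traceDist (cqState P ρ) (cqState Q σ)
      = ∑ x, traceDist ((P x : ℂ) • ρ x) ((Q x : ℂ) • σ x) := by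
  rw [cqState_eq_reindex_blockDiagonal, cqState_eq_reindex_blockDiagonal, traceDist_reindex,
    traceDist_blockDiagonal]
  intro x
  exact ((hρ x).1.isHermitian.smul (Complex.conj_ofReal _)).sub
    ((hσ x).1.isHermitian.smul (Complex.conj_ofReal _))

/-- The trace distance between two cq-states decomposes blockwise. -/
theorem stmt0 {𝒳 : Type*} [Fintype 𝒳] [DecidableEq 𝒳] {d : ℕ} (hd : 1 ≤ d)
    (P Q : 𝒳 → ℝ) (hP : IsPMF P) (hQ : IsPMF Q)
    (ρ σ : 𝒳 → Matrix (Fin d) (Fin d) ℂ)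
    (hρ : ∀ x, IsDensity (ρ x)) (hσ : ∀ x, IsDensity (σ x)) :
    traceDist (cqState P ρ) (cqState Q σ)
      = ∑ x, traceDist ((P x : ℂ) • ρ x) ((Q x : ℂ) • σ x) :=
  stmt0_general P Q ρ σ hρ hσ
end

section
/- Let 𝒳 be a finite type, d ≥ 1, let P and Q be probability mass functions on 𝒳, and let (ρ^x)_{x∈𝒳} and (σ^x)_{x∈𝒳} be families of d×d density matrices. Then the statistical distance of the classical marginals is bounded by the trace distance of the cq-states: (1/2)·Σ_x |P(x) − Q(x)| ≤ δ(Σ_x P(x)·(E_{x,x}⊗ρ^x), Σ_x Q(x)·(E_{x,x}⊗σ^x)). -/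
/-!
Let `A` be the difference of the two cq-states. The real part of its diagonal entry at `(x, j)`
is `P x * ρ^x_jj - Q x * σ^x_jj`, so weighting the diagonal by the sign of `P x - Q x` and summing
over `j` gives `∑ x, |P x - Q x|`. In an eigenbasis `(v_k)` of `A`, each diagonal entry is
`∑ k, λ_k |v_k i|²` and `∑ i, |v_k i|² = 1`, so any diagonal sum with weights in `[-1, 1]` is at
most `∑ k, |λ_k|`.
-/
open Matrix Kronecker
open scoped ComplexOrder

lemma OrthonormalBasis.sum_norm_sq_apply {𝕜 ι n : Type*} [RCLike 𝕜] [Fintype ι] [Fintype n]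
    (b : OrthonormalBasis ι 𝕜 (EuclideanSpace 𝕜 n)) (k : ι) :
    ∑ i, ‖b k i‖ ^ 2 = 1 := by
  rw [← EuclideanSpace.norm_sq_eq, b.orthonormal.1 k, one_pow]

namespace Matrix.IsHermitian

variable {𝕜 n : Type*} [RCLike 𝕜] [Fintype n] [DecidableEq n] {A : Matrix n n 𝕜}

lemma re_diag_eq_sum_eigenvalues_mul (hA : A.IsHermitian) (i : n) :
    RCLike.re (A i i) = ∑ k, hA.eigenvalues k * ‖hA.eigenvectorBasis k i‖ ^ 2 := by
  conv_lhs => rw [hA.spectral_theorem, Unitary.conjStarAlgAut_apply]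
  simp only [mul_apply, diagonal_apply, Function.comp_apply, star_apply, mul_ite, mul_zero,
    Finset.sum_ite_eq', Finset.mem_univ, if_true, map_sum, eigenvectorUnitary_apply]
  refine Finset.sum_congr rfl fun k _ => ?_
  rw [RCLike.star_def, mul_right_comm, RCLike.mul_conj, ← RCLike.ofReal_pow, ← RCLike.ofReal_mul,
    RCLike.ofReal_re, mul_comm]

lemma sum_mul_re_diag_le_sum_abs_eigenvalues (hA : A.IsHermitian) {m : n → ℝ}
    (hm : ∀ i, |m i| ≤ 1) :
    ∑ i, m i * RCLike.re (A i i) ≤ ∑ k, |hA.eigenvalues k| := by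
  set w : n → ℝ := fun k => ∑ i, m i * ‖hA.eigenvectorBasis k i‖ ^ 2
  have hw : ∀ k, |w k| ≤ 1 := fun k => calc
    |w k| ≤ ∑ i, |m i * ‖hA.eigenvectorBasis k i‖ ^ 2| := Finset.abs_sum_le_sum_abs _ _
    _ = ∑ i, |m i| * ‖hA.eigenvectorBasis k i‖ ^ 2 := by simp only [abs_mul, abs_pow, abs_norm]
    _ ≤ ∑ i, ‖hA.eigenvectorBasis k i‖ ^ 2 :=
      Finset.sum_le_sum fun i _ => mul_le_of_le_one_left (by positivity) (hm i)
    _ = 1 := hA.eigenvectorBasis.sum_norm_sq_apply k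
  calc ∑ i, m i * RCLike.re (A i i) = ∑ k, hA.eigenvalues k * w k := by
        simp only [w, hA.re_diag_eq_sum_eigenvalues_mul, Finset.mul_sum]
        rw [Finset.sum_comm]
        exact Finset.sum_congr rfl fun k _ => Finset.sum_congr rfl fun i _ => by ring
    _ ≤ ∑ k, |hA.eigenvalues k| := Finset.sum_le_sum fun k _ => calc
        hA.eigenvalues k * w k ≤ |hA.eigenvalues k| * |w k| := by
          rw [← abs_mul]; exact le_abs_self _
        _ ≤ |hA.eigenvalues k| := mul_le_of_le_one_right (abs_nonneg _) (hw k)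

end Matrix.IsHermitian

section CQState

variable {𝒯 : Type*} [Fintype 𝒯] [DecidableEq 𝒯] {d : ℕ}

lemma cqState_apply (P : 𝒯 → ℝ) (ρ : 𝒯 → Matrix (Fin d) (Fin d) ℂ) (x y : 𝒯) (j k : Fin d) :
    cqState P ρ (x, j) (y, k) = if x = y then (P x : ℂ) * ρ x j k else 0 := by
  simp only [cqState, Matrix.sum_apply, Matrix.smul_apply, kroneckerMap_apply, single_apply,
    smul_eq_mul]
  rw [Finset.sum_eq_single x]
  · by_cases h : x = y <;> simp [h]
  · intro t _ ht; simp [ht]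
  · simp

lemma isHermitian_cqState (P : 𝒯 → ℝ) {ρ : 𝒯 → Matrix (Fin d) (Fin d) ℂ}
    (hρ : ∀ t, (ρ t).IsHermitian) : (cqState P ρ).IsHermitian := by
  ext ⟨x, j⟩ ⟨y, k⟩
  rw [conjTranspose_apply, cqState_apply, cqState_apply]
  by_cases h : x = y
  · subst h
    simp [← (hρ x).apply j k]
  · simp [h, Ne.symm h]

lemma sum_re_diag_cqState (P : 𝒯 → ℝ) (ρ : 𝒯 → Matrix (Fin d) (Fin d) ℂ) (x : 𝒯) :
    ∑ j, (cqState P ρ (x, j) (x, j)).re = P x * (ρ x).trace.re := by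
  simp [cqState_apply, trace, Complex.re_sum, Finset.mul_sum]

end CQState

theorem stmt2_general {𝒳 : Type*} [Fintype 𝒳] [DecidableEq 𝒳] {d : ℕ}
    (P Q : 𝒳 → ℝ)
    (ρ σ : 𝒳 → Matrix (Fin d) (Fin d) ℂ)
    (hρ : ∀ x, IsDensity (ρ x)) (hσ : ∀ x, IsDensity (σ x)) :
    (1 / 2) * ∑ x, |P x - Q x| ≤ traceDist (cqState P ρ) (cqState Q σ) := by
  have hH := (isHermitian_cqState P fun x => (hρ x).1.1).sub
    (isHermitian_cqState Q fun x => (hσ x).1.1)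
  rw [traceDist, dif_pos hH]
  set s : 𝒳 × Fin d → ℝ := fun i => SignType.sign (P i.1 - Q i.1)
  have hs : ∀ i, |s i| ≤ 1 := fun i => by
    rcases lt_trichotomy (P i.1 - Q i.1) 0 with h | h | h <;> simp [s, h]
  have hdiag : ∑ i, s i * RCLike.re ((cqState P ρ - cqState Q σ) i i) = ∑ x, |P x - Q x| := by
    rw [Fintype.sum_prod_type]
    refine Finset.sum_congr rfl fun x _ => ?_
    simp only [s, Matrix.sub_apply, RCLike.re_to_complex, Complex.sub_re]
    rw [← Finset.mul_sum, Finset.sum_sub_distrib, sum_re_diag_cqState, sum_re_diag_cqState,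
      (hρ x).2, (hσ x).2, Complex.one_re, mul_one, mul_one, sign_mul_self]
  linarith [hH.sum_mul_re_diag_le_sum_abs_eigenvalues hs]

/-- The statistical distance of the classical marginals is bounded by the
trace distance of the cq-states. -/
theorem stmt2 {𝒳 : Type*} [Fintype 𝒳] [DecidableEq 𝒳] {d : ℕ} (hd : 1 ≤ d)
    (P Q : 𝒳 → ℝ) (hP : IsPMF P) (hQ : IsPMF Q)
    (ρ σ : 𝒳 → Matrix (Fin d) (Fin d) ℂ)
    (hρ : ∀ x, IsDensity (ρ x)) (hσ : ∀ x, IsDensity (σ x)) :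
    (1 / 2) * ∑ x, |P x - Q x| ≤ traceDist (cqState P ρ) (cqState Q σ) :=
  stmt2_general P Q ρ σ hρ hσ
end

section
/- Let 𝒳, 𝒵 be finite types with 𝒳 nonempty, d ≥ 1, P a probability mass function on 𝒳×𝒵, (ρ^{x,z}) a family of d×d density matrices, and ε ≥ 0. If δ(ρ_{XZE}, (I/|𝒳|) ⊗ ρ_{ZE}) ≤ ε, where (I/|𝒳|) ⊗ ρ_{ZE} := Σ_{x,z} (1/|𝒳|)·P_Z(z)·(E_{(x,z),(x,z)} ⊗ τ^z), then δ(ρ_{XZE}, ρ_{X↔Z↔E}) ≤ 4ε. -/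
/-!
Write `A = ρ_{XZE}`, `B = (I/|𝒳|) ⊗ ρ_{ZE}`, `C = ρ_{X↔Z↔E}` and `Q(x,z) = P_Z(z)/|𝒳|`.
The states `B` and `C` carry the same conditional states `τ^z` and differ only in their
classical weights `Q` and `P`, so `‖B - C‖₁ ≤ Σ |P - Q|`. Conversely, pairing `A - B` with the
diagonal sign pattern of `P - Q` (constant on each block) shows `Σ |P - Q| ≤ ‖A - B‖₁`: the
classical distributions are no farther apart than the states. By the triangle inequality
`‖A - C‖₁ ≤ 2 ‖A - B‖₁`, i.e. `δ(A, C) ≤ 2ε ≤ 4ε`.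
-/

open Matrix Kronecker
open scoped ComplexOrder

noncomputable def traceNorm {n : Type*} [Fintype n] [DecidableEq n] (M : Matrix n n ℂ) : ℝ :=
  if h : M.IsHermitian then ∑ i, |h.eigenvalues i| else 0

section TraceNorm

variable {n : Type*} [Fintype n] [DecidableEq n]

lemma traceNorm_of_isHermitian {M : Matrix n n ℂ} (hM : M.IsHermitian) :
    traceNorm M = ∑ i, |hM.eigenvalues i| :=
  dif_pos hM

lemma traceNorm_nonneg (M : Matrix n n ℂ) : 0 ≤ traceNorm M := by
  unfold traceNorm
  split_ifs
  exacts [Finset.sum_nonneg fun i _ => abs_nonneg _, le_rfl]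

lemma traceDist_eq_half_traceNorm (A B : Matrix n n ℂ) :
    traceDist A B = 1 / 2 * traceNorm (A - B) := by
  unfold traceDist traceNorm
  split_ifs <;> simp

lemma traceNorm_of_posSemidef {M : Matrix n n ℂ} (hM : M.PosSemidef) :
    traceNorm M = M.trace.re := by
  rw [traceNorm_of_isHermitian hM.isHermitian, hM.isHermitian.trace_eq_sum_eigenvalues,
    Complex.re_sum]
  exact Finset.sum_congr rfl fun i _ => by simp [abs_of_nonneg (hM.eigenvalues_nonneg i)]

lemma sum_normSq_apply_eq_one {B : Matrix n n ℂ} (hB : Bᴴ * B = 1) (i : n) :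
    ∑ k, Complex.normSq (B k i) = 1 := by
  have h := congrFun (congrFun hB i) i
  simp only [mul_apply, conjTranspose_apply, one_apply_eq, Complex.star_def] at h
  exact_mod_cast (by push_cast; simpa [Complex.normSq_eq_conj_mul_self] using h :
    ((∑ k, Complex.normSq (B k i) : ℝ) : ℂ) = 1)

lemma re_trace_conj_diagonal_mul_conj_diagonal (U V : Matrix n n ℂ) (l s : n → ℝ) :
    (U * diagonal (fun i => (l i : ℂ)) * Uᴴ * (V * diagonal (fun k => (s k : ℂ)) * Vᴴ)).trace.re =
      ∑ i, ∑ k, l i * s k * Complex.normSq ((Vᴴ * U) k i) := by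
  set B := Vᴴ * U
  have h_cyc :
      (U * diagonal (fun i => (l i : ℂ)) * Uᴴ * (V * diagonal (fun k => (s k : ℂ)) * Vᴴ)).trace =
      (diagonal (fun i => (l i : ℂ)) * (Bᴴ * (diagonal (fun k => (s k : ℂ)) * B))).trace := by
    rw [conjTranspose_mul, conjTranspose_conjTranspose]
    simp only [Matrix.mul_assoc]
    rw [trace_mul_comm U]
    simp only [Matrix.mul_assoc]
    rfl
  have h_diag : ∀ i, (Bᴴ * (diagonal (fun k => (s k : ℂ)) * B)) i i =
      ((∑ k, s k * Complex.normSq (B k i) : ℝ) : ℂ) := fun i => by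
    rw [mul_apply]
    simp only [diagonal_mul, conjTranspose_apply, Complex.star_def]
    push_cast
    exact Finset.sum_congr rfl fun k _ => by rw [Complex.normSq_eq_conj_mul_self]; ring
  rw [h_cyc, trace, Complex.re_sum]
  refine Finset.sum_congr rfl fun i _ => ?_
  simp [diagonal_mul, h_diag, Finset.mul_sum, mul_assoc]

lemma Matrix.IsHermitian.eq_conj_diagonal_eigenvalues {M : Matrix n n ℂ} (hM : M.IsHermitian) :
    M = (hM.eigenvectorUnitary : Matrix n n ℂ) * diagonal (fun i => (hM.eigenvalues i : ℂ)) *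
      (hM.eigenvectorUnitary : Matrix n n ℂ)ᴴ := by
  simpa [Function.comp_def, star_eq_conjTranspose] using hM.spectral_theorem

/- The trace norm of a Hermitian `M` is the maximum of `Re tr (M * W)` over `W = V diag(s) Vᴴ`
with `V Vᴴ = 1` and `|s| ≤ 1`, attained at the eigenbasis of `M` with `s` the signs of its
eigenvalues. All the norm properties below are read off from this variational formula. -/
lemma abs_re_trace_mul_conj_diagonal_le_traceNorm {M : Matrix n n ℂ} (hM : M.IsHermitian)
    {V : Matrix n n ℂ} (hV : V * Vᴴ = 1) {s : n → ℝ} (hs : ∀ k, |s k| ≤ 1) :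
    |(M * (V * diagonal (fun k => (s k : ℂ)) * Vᴴ)).trace.re| ≤ traceNorm M := by
  have key := re_trace_conj_diagonal_mul_conj_diagonal (↑hM.eigenvectorUnitary) V hM.eigenvalues s
  rw [← hM.eq_conj_diagonal_eigenvalues] at key
  set B : Matrix n n ℂ := Vᴴ * (hM.eigenvectorUnitary : Matrix n n ℂ)
  have hB : Bᴴ * B = 1 := by
    rw [conjTranspose_mul, conjTranspose_conjTranspose, Matrix.mul_assoc, ← Matrix.mul_assoc V,
      hV, Matrix.one_mul]
    exact Unitary.coe_star_mul_self hM.eigenvectorUnitary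
  rw [key, traceNorm_of_isHermitian hM]
  refine (Finset.abs_sum_le_sum_abs _ _).trans (Finset.sum_le_sum fun i _ => ?_)
  calc |∑ k, hM.eigenvalues i * s k * Complex.normSq (B k i)|
      ≤ ∑ k, |hM.eigenvalues i| * Complex.normSq (B k i) := by
        refine (Finset.abs_sum_le_sum_abs _ _).trans (Finset.sum_le_sum fun k _ => ?_)
        rw [abs_mul, abs_mul, abs_of_nonneg (Complex.normSq_nonneg _)]
        exact mul_le_mul_of_nonneg_right (mul_le_of_le_one_right (abs_nonneg _) (hs k))
          (Complex.normSq_nonneg _)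
    _ = |hM.eigenvalues i| := by rw [← Finset.mul_sum, sum_normSq_apply_eq_one hB i, mul_one]

lemma exists_traceNorm_eq_re_trace_mul_conj_diagonal {M : Matrix n n ℂ} (hM : M.IsHermitian) :
    ∃ (V : Matrix n n ℂ) (s : n → ℝ), V * Vᴴ = 1 ∧ (∀ k, |s k| ≤ 1) ∧
      traceNorm M = (M * (V * diagonal (fun k => (s k : ℂ)) * Vᴴ)).trace.re := by
  refine ⟨↑hM.eigenvectorUnitary, fun i => SignType.sign (hM.eigenvalues i),
    Unitary.coe_mul_star_self _, fun k => ?_, ?_⟩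
  · rcases lt_trichotomy (hM.eigenvalues k) 0 with h | h | h <;> simp [h]
  · have key := re_trace_conj_diagonal_mul_conj_diagonal (↑hM.eigenvectorUnitary)
      (↑hM.eigenvectorUnitary) hM.eigenvalues (fun i => SignType.sign (hM.eigenvalues i))
    have hUU : (hM.eigenvectorUnitary : Matrix n n ℂ)ᴴ * hM.eigenvectorUnitary = 1 :=
      Unitary.coe_star_mul_self _
    rw [← hM.eq_conj_diagonal_eigenvalues, hUU] at key
    rw [key, traceNorm_of_isHermitian hM]
    simp [one_apply]

lemma traceNorm_add_le {M N : Matrix n n ℂ} (hM : M.IsHermitian) (hN : N.IsHermitian) :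
    traceNorm (M + N) ≤ traceNorm M + traceNorm N := by
  obtain ⟨V, s, hV, hs, h_eq⟩ := exists_traceNorm_eq_re_trace_mul_conj_diagonal (hM.add hN)
  rw [h_eq, Matrix.add_mul, trace_add, Complex.add_re]
  exact add_le_add ((le_abs_self _).trans (abs_re_trace_mul_conj_diagonal_le_traceNorm hM hV hs))
    ((le_abs_self _).trans (abs_re_trace_mul_conj_diagonal_le_traceNorm hN hV hs))

lemma traceNorm_real_smul_le {M : Matrix n n ℂ} (hM : M.IsHermitian) (c : ℝ) :
    traceNorm ((c : ℂ) • M) ≤ |c| * traceNorm M := by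
  obtain ⟨V, s, hV, hs, h_eq⟩ :=
    exists_traceNorm_eq_re_trace_mul_conj_diagonal (hM.smul (Complex.conj_ofReal c))
  rw [h_eq, Matrix.smul_mul, trace_smul, smul_eq_mul, Complex.re_ofReal_mul]
  exact (le_abs_self _).trans ((abs_mul _ _).trans_le (mul_le_mul_of_nonneg_left
    (abs_re_trace_mul_conj_diagonal_le_traceNorm hM hV hs) (abs_nonneg c)))

lemma traceNorm_sum_le {ι : Type*} (s : Finset ι) {M : ι → Matrix n n ℂ}
    (hM : ∀ i ∈ s, (M i).IsHermitian) :
    traceNorm (∑ i ∈ s, M i) ≤ ∑ i ∈ s, traceNorm (M i) := by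
  induction s using Finset.cons_induction with
  | empty => simpa using (traceNorm_of_posSemidef (PosSemidef.zero (n := n) (R := ℂ))).le
  | cons a s ha ih =>
    rw [Finset.sum_cons, Finset.sum_cons]
    have hM' := (Finset.forall_mem_cons ha _).1 hM
    exact (traceNorm_add_le hM'.1 (isSelfAdjoint_sum s hM'.2)).trans
      (add_le_add_right (ih hM'.2) _)

lemma sum_mul_re_diag_le_traceNorm {M : Matrix n n ℂ} (hM : M.IsHermitian) {s : n → ℝ}
    (hs : ∀ k, |s k| ≤ 1) :
    ∑ k, s k * (M k k).re ≤ traceNorm M := by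
  have h := abs_re_trace_mul_conj_diagonal_le_traceNorm hM (V := 1) (by simp) hs
  simp only [Matrix.one_mul, conjTranspose_one, Matrix.mul_one] at h
  refine le_of_eq_of_le ?_ ((le_abs_self _).trans h)
  simp [trace, Complex.re_sum, mul_diagonal, mul_comm]

end TraceNorm

lemma Matrix.IsHermitian.kronecker {R m p : Type*} [CommRing R] [StarRing R]
    {A : Matrix m m R} {B : Matrix p p R} (hA : A.IsHermitian) (hB : B.IsHermitian) :
    (A ⊗ₖ B).IsHermitian := by
  rw [IsHermitian, conjTranspose_kronecker, hA.eq, hB.eq]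

lemma Matrix.posSemidef_single_one {m : Type*} [Fintype m] [DecidableEq m] (i : m) :
    (single i i (1 : ℂ)).PosSemidef := by
  rw [← diagonal_single]
  exact PosSemidef.diagonal (Pi.single_nonneg.2 zero_le_one)

section CqState

variable {𝒯 : Type*} [Fintype 𝒯] [DecidableEq 𝒯] {d : ℕ}

lemma cqState_apply_same (P : 𝒯 → ℝ) (ρ : 𝒯 → Matrix (Fin d) (Fin d) ℂ) (t : 𝒯)
    (k k' : Fin d) :
    cqState P ρ (t, k) (t, k') = P t * ρ t k k' := by
  simp [cqState, Matrix.sum_apply, single_apply]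

lemma cqState_sub_cqState (P Q : 𝒯 → ℝ) (ρ : 𝒯 → Matrix (Fin d) (Fin d) ℂ) :
    cqState P ρ - cqState Q ρ = cqState (P - Q) ρ := by
  simp [cqState, ← Finset.sum_sub_distrib, sub_smul]

lemma sum_abs_sub_le_traceNorm_cqState_sub (P Q : 𝒯 → ℝ)
    {ρ σ : 𝒯 → Matrix (Fin d) (Fin d) ℂ} (hρ : ∀ t, (ρ t).IsHermitian)
    (hσ : ∀ t, (σ t).IsHermitian) :
    ∑ t, |P t * (ρ t).trace.re - Q t * (σ t).trace.re| ≤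
      traceNorm (cqState P ρ - cqState Q σ) := by
  set s : 𝒯 → ℝ := fun t => SignType.sign (P t * (ρ t).trace.re - Q t * (σ t).trace.re)
  have hs : ∀ t, |s t| ≤ 1 := fun t => by
    rcases lt_trichotomy (P t * (ρ t).trace.re - Q t * (σ t).trace.re) 0 with h | h | h <;>
      simp [s, h]
  refine le_of_eq_of_le ?_ (sum_mul_re_diag_le_traceNorm
    ((isHermitian_cqState P hρ).sub (isHermitian_cqState Q hσ)) (s := fun p => s p.1)
    fun p => hs p.1)
  rw [Fintype.sum_prod_type]
  refine Finset.sum_congr rfl fun t _ => ?_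
  simp [s, cqState_apply_same, ← Finset.mul_sum, trace, Complex.re_sum, Finset.sum_sub_distrib]

lemma traceNorm_cqState_le (P : 𝒯 → ℝ) {ρ : 𝒯 → Matrix (Fin d) (Fin d) ℂ}
    (hρ : ∀ t, (ρ t).PosSemidef) :
    traceNorm (cqState P ρ) ≤ ∑ t, |P t| * (ρ t).trace.re := by
  have hblock : ∀ t, (single t t (1 : ℂ) ⊗ₖ ρ t).PosSemidef := fun t =>
    (posSemidef_single_one t).kronecker (hρ t)
  refine (traceNorm_sum_le _ fun t _ => (hblock t).isHermitian.smul (Complex.conj_ofReal _)).trans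
    (Finset.sum_le_sum fun t _ => (traceNorm_real_smul_le (hblock t).isHermitian _).trans_eq ?_)
  rw [traceNorm_of_posSemidef (hblock t), trace_kronecker, trace_single_eq_same, one_mul]

end CqState

-- `condState (fun x => P (x, z)) (fun x => ρ (x, z))` is the paper's `τ^z`.
noncomputable def condState {ι m : Type*} [Fintype ι] (w : ι → ℝ) (ρ : ι → Matrix m m ℂ) :
    Matrix m m ℂ :=
  if 0 < ∑ i, w i then ((∑ i, w i : ℝ) : ℂ)⁻¹ • ∑ i, (w i : ℂ) • ρ i else 0

section CondState

variable {ι m : Type*} [Fintype ι] {w : ι → ℝ} {ρ : ι → Matrix m m ℂ}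

lemma posSemidef_condState (hw : ∀ i, 0 ≤ w i) (hρ : ∀ i, (ρ i).PosSemidef) :
    (condState w ρ).PosSemidef := by
  unfold condState
  split_ifs with h
  · rw [← Complex.ofReal_inv]
    exact (posSemidef_sum _ fun i _ => (hρ i).smul (Complex.zero_le_real.2 (hw i))).smul
      (Complex.zero_le_real.2 (inv_nonneg.2 h.le))
  · exact .zero

lemma trace_condState [Fintype m] (hρ : ∀ i, (ρ i).trace = 1) :
    (condState w ρ).trace = if 0 < ∑ i, w i then 1 else 0 := by
  unfold condState
  split_ifs with h
  · simp only [Complex.ofReal_sum, Complex.coe_smul, trace_smul, trace_sum, hρ,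
      Complex.real_smul, mul_one, smul_eq_mul]
    exact inv_mul_cancel₀ (by exact_mod_cast h.ne')
  · simp

end CondState

lemma traceDist_nonneg {n : Type*} [Fintype n] [DecidableEq n] (A B : Matrix n n ℂ) :
    0 ≤ traceDist A B := by
  rw [traceDist_eq_half_traceNorm]
  exact mul_nonneg (by norm_num) (traceNorm_nonneg _)

lemma traceDist_cqState_le_two_mul {𝒯 : Type*} [Fintype 𝒯] [DecidableEq 𝒯] {d : ℕ}
    {P Q : 𝒯 → ℝ} {ρ σ : 𝒯 → Matrix (Fin d) (Fin d) ℂ} (hρ : ∀ t, IsDensity (ρ t))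
    (hσ : ∀ t, (σ t).PosSemidef) (hσ_le : ∀ t, (σ t).trace.re ≤ 1)
    (hQσ : ∀ t, Q t ≠ 0 → (σ t).trace = 1) :
    traceDist (cqState P ρ) (cqState P σ) ≤ 2 * traceDist (cqState P ρ) (cqState Q σ) := by
  set A := cqState P ρ
  set B := cqState Q σ
  set C := cqState P σ
  have hA : A.IsHermitian := isHermitian_cqState P fun t => (hρ t).1.isHermitian
  have hB : B.IsHermitian := isHermitian_cqState Q fun t => (hσ t).isHermitian
  have hC : C.IsHermitian := isHermitian_cqState P fun t => (hσ t).isHermitian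
  have h_marginal : ∑ t, |P t - Q t| ≤ traceNorm (A - B) := by
    convert sum_abs_sub_le_traceNorm_cqState_sub P Q (fun t => (hρ t).1.isHermitian)
      (fun t => (hσ t).isHermitian) using 3 with t
    rw [(hρ t).2, Complex.one_re, mul_one]
    rcases eq_or_ne (Q t) 0 with hQ | hQ
    · simp [hQ]
    · simp [hQσ t hQ]
  have h_markov : traceNorm (B - C) ≤ ∑ t, |P t - Q t| := by
    have hBC : B - C = cqState (Q - P) σ := cqState_sub_cqState _ _ _
    rw [hBC]
    calc traceNorm (cqState (Q - P) σ)
        ≤ ∑ t, |(Q - P) t| * (σ t).trace.re := traceNorm_cqState_le _ hσ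
      _ ≤ ∑ t, |P t - Q t| := Finset.sum_le_sum fun t _ => by
        rw [Pi.sub_apply, abs_sub_comm]
        exact mul_le_of_le_one_right (abs_nonneg _) (hσ_le t)
  have h_triangle := traceNorm_add_le (hA.sub hB) (hB.sub hC)
  rw [sub_add_sub_cancel] at h_triangle
  rw [traceDist_eq_half_traceNorm, traceDist_eq_half_traceNorm]
  linarith

theorem stmt5_general {𝒳 𝒵 : Type*} [Fintype 𝒳] [DecidableEq 𝒳]
    [Fintype 𝒵] [DecidableEq 𝒵] {d : ℕ}
    (P : 𝒳 × 𝒵 → ℝ) (hP : IsPMF P)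
    (ρ : 𝒳 × 𝒵 → Matrix (Fin d) (Fin d) ℂ) (hρ : ∀ t, IsDensity (ρ t))
    (ε : ℝ)
    -- marginal
    (PZ : 𝒵 → ℝ) (hPZ : ∀ z, PZ z = ∑ x, P (x, z))
    -- conditional states τ^z
    (τ : 𝒵 → Matrix (Fin d) (Fin d) ℂ)
    (hτ : ∀ z, τ z =
      if 0 < PZ z then ((PZ z : ℂ))⁻¹ • ∑ x, (P (x, z) : ℂ) • ρ (x, z) else 0)
    -- hypothesis: ρ_{XZE} is ε-close to (I/|𝒳|) ⊗ ρ_{ZE}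
    (h : traceDist (cqState P ρ)
        (cqState (fun t => (1 / (Fintype.card 𝒳 : ℝ)) * PZ t.2) (fun t => τ t.2)) ≤ ε) :
    -- conclusion: ρ_{XZE} is 4ε-close to ρ_{X↔Z↔E}
    traceDist (cqState P ρ) (cqState P (fun t => τ t.2)) ≤ 4 * ε := by
  have hτ_cond : ∀ z, τ z = condState (fun x => P (x, z)) (fun x => ρ (x, z)) := fun z => by
    rw [hτ z, hPZ z]
    rfl
  have hτ_psd : ∀ z, (τ z).PosSemidef := fun z =>
    hτ_cond z ▸ posSemidef_condState (fun x => hP.1 _) fun x => (hρ _).1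
  have hτ_trace : ∀ z, (τ z).trace = if 0 < PZ z then 1 else 0 := fun z => by
    rw [hτ_cond, trace_condState fun x => (hρ (x, z)).2, ← hPZ]
  have hτ_le : ∀ z, (τ z).trace.re ≤ 1 := fun z => by
    rw [hτ_trace]
    split_ifs <;> simp
  have hPZ_nonneg : ∀ z, 0 ≤ PZ z := fun z =>
    hPZ z ▸ Finset.sum_nonneg fun x _ => hP.1 (x, z)
  set Q : 𝒳 × 𝒵 → ℝ := fun t => 1 / (Fintype.card 𝒳 : ℝ) * PZ t.2
  have hτ_one : ∀ t, Q t ≠ 0 → (τ t.2).trace = 1 := fun t hQ => by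
    rw [hτ_trace, if_pos ((hPZ_nonneg _).lt_of_ne' (right_ne_zero_of_mul hQ))]
  have h_two : traceDist (cqState P ρ) (cqState P fun t => τ t.2) ≤
      2 * traceDist (cqState P ρ) (cqState Q fun t => τ t.2) :=
    traceDist_cqState_le_two_mul hρ (fun t => hτ_psd t.2) (fun t => hτ_le t.2) hτ_one
  linarith [traceDist_nonneg (cqState P ρ) (cqState Q fun t => τ t.2)]

/-- If ρ_{XZE} is ε-close to the state (I/|𝒳|) ⊗ ρ_{ZE} (uniform and independent
X), then it is 4ε-close to the Markov state ρ_{X↔Z↔E}. -/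
theorem stmt5 {𝒳 𝒵 : Type*} [Fintype 𝒳] [DecidableEq 𝒳] [Nonempty 𝒳]
    [Fintype 𝒵] [DecidableEq 𝒵] {d : ℕ} (hd : 1 ≤ d)
    (P : 𝒳 × 𝒵 → ℝ) (hP : IsPMF P)
    (ρ : 𝒳 × 𝒵 → Matrix (Fin d) (Fin d) ℂ) (hρ : ∀ t, IsDensity (ρ t))
    (ε : ℝ) (hε : 0 ≤ ε)
    -- marginal
    (PZ : 𝒵 → ℝ) (hPZ : ∀ z, PZ z = ∑ x, P (x, z))
    -- conditional states τ^z
    (τ : 𝒵 → Matrix (Fin d) (Fin d) ℂ)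
    (hτ : ∀ z, τ z =
      if 0 < PZ z then ((PZ z : ℂ))⁻¹ • ∑ x, (P (x, z) : ℂ) • ρ (x, z) else 0)
    -- hypothesis: ρ_{XZE} is ε-close to (I/|𝒳|) ⊗ ρ_{ZE}
    (h : traceDist (cqState P ρ)
        (cqState (fun t => (1 / (Fintype.card 𝒳 : ℝ)) * PZ t.2) (fun t => τ t.2)) ≤ ε) :
    -- conclusion: ρ_{XZE} is 4ε-close to ρ_{X↔Z↔E}
    traceDist (cqState P ρ) (cqState P (fun t => τ t.2)) ≤ 4 * ε :=
  stmt5_general P hP ρ hρ ε PZ hPZ τ hτ h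
end
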